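/- arXiv:1309.5987 — 3 statements merged into one kernel-verified Lean document; each statement's English description precedes it below -/
import Mathlib

section
/- Let D be a squarefree positive integer with D ≢ 0 (mod 4), let 𝕀 = ℚ(√−D) be the corresponding imaginary quadratic field and ℤ_𝕀 its ring of integers, and set τ = 1 if D ≡ 1 or 2 (mod 4) and τ = 1/2 if D ≡ 3 (mod 4). Then for any complex numbers Θ₁, …, Θ_m ∈ ℂ and any positive integers H₁, …, H_m there exists a nonzero vector (β₀, β₁, …, β_m) ∈ ℤ_𝕀^{m+1} \ {0} with |β_j| ≤ H_j for all j = 1, …, m satisfying |β₀ + β₁Θ₁ + … + β_mΘ_m| ≤ (2^τ D^{1/4}/√π)^{m+1} · 1/(H₁⋯H_m). -/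
/-- The generator `h + l√(-D)` of the ring of integers of `ℚ(√(-D))`:
`h = 0, l = 1` if `D ≡ 1, 2 (mod 4)` and `h = l = 1/2` if `D ≡ 3 (mod 4)`. -/
noncomputable def iqGen (D : ℕ) : ℂ :=
  if D % 4 = 3 then (1 + Real.sqrt D * Complex.I) / 2 else Real.sqrt D * Complex.I

/-- The ring of integers `ℤ_𝕀 = ℤ + ℤ(h + l√(-D)) ⊆ ℂ` of the imaginary quadratic
field `𝕀 = ℚ(√(-D))`. -/
noncomputable def iqInt (D : ℕ) : Set ℂ :=
  {z | ∃ p q : ℤ, z = (p : ℂ) + (q : ℂ) * iqGen D}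

/-!
Minkowski's convex body theorem, applied to the lattice `ℤ_𝕀^{m+1}` in `ℂ^{m+1} ≅ ℝ^{2(m+1)}`.
With `g = h + l√-D`, the lattice `ℤ + ℤg` has covolume `Im g`, so `ℤ_𝕀^{m+1}` has covolume
`(Im g)^{m+1}`. The body `{|β₀ + Σ βⱼΘⱼ| ≤ ε, |βⱼ| ≤ Hⱼ}` is the preimage of a product of discs
under a volume-preserving shear, so its volume is `πε² ∏ πHⱼ²`. The constant `c = 2^τ D^{1/4}/√π`
is the one with `πc² = 4 Im g`; for `ε = c^{m+1}/∏ Hⱼ` the volume of the body is then exactly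
`2^{2(m+1)}` times the covolume, which is what Minkowski's theorem needs.
-/

open MeasureTheory Module Submodule

namespace Complex

variable {g : ℂ}

theorem linearIndependent_one_of_im_ne_zero (hg : g.im ≠ 0) :
    LinearIndependent ℝ ![1, g] :=
  (LinearIndependent.pair_iff' one_ne_zero).2 fun a h => hg <| by simp [← h]

noncomputable def basisOne (g : ℂ) (hg : g.im ≠ 0) : Basis (Fin 2) ℝ ℂ :=
  basisOfLinearIndependentOfCardEqFinrank (linearIndependent_one_of_im_ne_zero hg)
    (by simp)

@[simp]
theorem coe_basisOne (hg : g.im ≠ 0) : ⇑(basisOne g hg) = ![1, g] :=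
  coe_basisOfLinearIndependentOfCardEqFinrank _ _

theorem mem_span_basisOne (hg : g.im ≠ 0) {z : ℂ} :
    z ∈ span ℤ (Set.range (basisOne g hg)) ↔ ∃ p q : ℤ, z = p + q * g := by
  rw [coe_basisOne, Matrix.range_cons, Matrix.range_cons, Matrix.range_empty,
    Set.union_empty, Set.singleton_union, mem_span_pair]
  simp only [zsmul_eq_mul, mul_one, eq_comm (a := z)]

theorem volume_fundamentalDomain_basisOneI :
    volume (ZSpan.fundamentalDomain basisOneI) = 1 := by
  have : ZSpan.fundamentalDomain basisOneI =
      measurableEquivPi ⁻¹' Set.univ.pi fun _ => Set.Ico 0 1 := by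
    ext z
    simp [ZSpan.mem_fundamentalDomain, measurableEquivPi, Fin.forall_fin_two]
  rw [this, volume_preserving_equiv_pi.measure_preimage
    (MeasurableSet.univ_pi fun _ => measurableSet_Ico).nullMeasurableSet]
  simp [volume_pi, Measure.pi_pi]

theorem volume_fundamentalDomain_basisOne (hg : g.im ≠ 0) :
    volume (ZSpan.fundamentalDomain (basisOne g hg)) = ENNReal.ofReal |g.im| := by
  rw [ZSpan.measure_fundamentalDomain _ _ basisOneI, volume_fundamentalDomain_basisOneI, mul_one,
    Basis.det_apply, Matrix.det_fin_two]
  simp [Basis.toMatrix_apply]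

end Complex

namespace Pi

variable {ι η E : Type*}

theorem mem_span_int_basis [AddCommGroup E] [Module ℝ E] [Fintype ι] (b : Basis η ℝ E)
    {x : ι → E} :
    x ∈ span ℤ (Set.range (Pi.basis fun _ : ι => b)) ↔
      ∀ i, x i ∈ span ℤ (Set.range b) := by
  simp only [Basis.mem_span_iff_repr_mem, Pi.basis_repr, Sigma.forall]

variable [NormedAddCommGroup E] [NormedSpace ℝ E]

theorem fundamentalDomain_basis [Fintype ι] (b : Basis η ℝ E) :
    ZSpan.fundamentalDomain (Pi.basis fun _ : ι => b) =
      Set.univ.pi fun _ => ZSpan.fundamentalDomain b := by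
  ext x
  simp only [ZSpan.mem_fundamentalDomain, Pi.basis_repr, Sigma.forall, Set.mem_univ_pi]

theorem volume_fundamentalDomain_basis [Fintype ι] [MeasureSpace E]
    [SigmaFinite (volume : Measure E)] (b : Basis η ℝ E) :
    volume (ZSpan.fundamentalDomain (Pi.basis fun _ : ι => b)) =
      volume (ZSpan.fundamentalDomain b) ^ Fintype.card ι := by
  rw [fundamentalDomain_basis, volume_pi, Measure.pi_pi, Finset.prod_const, Finset.card_univ]

end Pi

theorem MeasureTheory.measurePreserving_add_comp_prod {G β : Type*} [MeasurableSpace G]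
    [AddGroup G] [MeasurableAdd₂ G] [MeasurableSpace β] (μ : Measure G) [SFinite μ] [μ.IsAddRightInvariant]
    (ν : Measure β) [SFinite ν] {f : β → G} (hf : Measurable f) :
    MeasurePreserving (fun p : G × β => (p.1 + f p.2, p.2)) (μ.prod ν) (μ.prod ν) := by
  have hskew : MeasurePreserving (fun p : β × G => (p.1, p.2 + f p.1)) (ν.prod μ) (ν.prod μ) :=
    (MeasurePreserving.id ν).skew_product (measurable_snd.add (hf.comp measurable_fst))
      (.of_forall fun y => map_add_right_eq_self μ (f y))
  exact Measure.measurePreserving_swap.comp (hskew.comp Measure.measurePreserving_swap)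

section LinearForm

variable {m : ℕ}

noncomputable def linearFormShear (Θ : Fin m → ℂ) : (Fin (m + 1) → ℂ) ≃ₗ[ℂ] ℂ × (Fin m → ℂ) where
  toFun x := (x 0 + ∑ j, x j.succ * Θ j, Fin.tail x)
  invFun p := Fin.cons (p.1 - ∑ j, p.2 j * Θ j) p.2
  map_add' x y := by
    refine Prod.ext ?_ rfl
    simp only [Pi.add_apply, add_mul, Finset.sum_add_distrib, Prod.fst_add]
    ring
  map_smul' c x := by
    ext <;> simp [Finset.mul_sum, Fin.tail, mul_assoc, mul_add]
  left_inv x := by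
    ext i; cases i using Fin.cases <;> simp [Fin.tail]
  right_inv p := by
    ext <;> simp [Fin.tail]

@[simp]
theorem linearFormShear_apply (Θ : Fin m → ℂ) (x : Fin (m + 1) → ℂ) :
    linearFormShear Θ x = (x 0 + ∑ j, x j.succ * Θ j, Fin.tail x) :=
  rfl

theorem measurePreserving_linearFormShear (Θ : Fin m → ℂ) :
    MeasurePreserving (linearFormShear Θ) volume (volume.prod volume) := by
  have hsplit : MeasurePreserving (MeasurableEquiv.piFinSuccAbove (fun _ : Fin (m + 1) => ℂ) 0)
      volume (volume.prod volume) := by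
    simpa only [← volume_pi] using measurePreserving_piFinSuccAbove (fun _ => volume) 0
  convert (measurePreserving_add_comp_prod volume volume
    (f := fun w : Fin m → ℂ => ∑ j, w j * Θ j) (by fun_prop)).comp hsplit using 1
  funext x
  simp [MeasurableEquiv.piFinSuccAbove, Fin.tail]

noncomputable def linearFormBody (Θ : Fin m → ℂ) (ε : ℝ) (H : Fin m → ℝ) :
    Set (Fin (m + 1) → ℂ) :=
  linearFormShear Θ ⁻¹' (Metric.closedBall 0 ε ×ˢ Set.univ.pi fun j => Metric.closedBall 0 (H j))

section linearFormBody

variable {Θ : Fin m → ℂ} {ε : ℝ} {H : Fin m → ℝ}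

theorem mem_linearFormBody {x : Fin (m + 1) → ℂ} :
    x ∈ linearFormBody Θ ε H ↔ ‖x 0 + ∑ j, x j.succ * Θ j‖ ≤ ε ∧ ∀ j, ‖x j.succ‖ ≤ H j := by
  simp [linearFormBody, Fin.tail]

theorem neg_mem_linearFormBody {x : Fin (m + 1) → ℂ} (hx : x ∈ linearFormBody Θ ε H) :
    -x ∈ linearFormBody Θ ε H := by
  simp only [mem_linearFormBody, Pi.neg_apply, neg_mul, Finset.sum_neg_distrib, ← neg_add,
    norm_neg] at hx ⊢
  exact hx

theorem convex_linearFormBody : Convex ℝ (linearFormBody Θ ε H) :=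
  ((convex_closedBall (0 : ℂ) ε).prod
    (convex_pi fun j _ => convex_closedBall (0 : ℂ) (H j))).linear_preimage
    ((linearFormShear Θ).toLinearMap.restrictScalars ℝ)

theorem isCompact_linearFormBody : IsCompact (linearFormBody Θ ε H) :=
  (linearFormShear Θ).toContinuousLinearEquiv.toHomeomorph.isCompact_preimage.2
    ((isCompact_closedBall _ _).prod (isCompact_univ_pi fun _ => isCompact_closedBall _ _))

theorem volume_linearFormBody (hε : 0 ≤ ε) (hH : ∀ j, 0 ≤ H j) :
    volume (linearFormBody Θ ε H) =
      ENNReal.ofReal ((Real.pi * ε ^ 2) * ∏ j, (Real.pi * H j ^ 2)) := by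
  have hK : MeasurableSet (Metric.closedBall (0 : ℂ) ε ×ˢ
      Set.univ.pi fun j => Metric.closedBall (0 : ℂ) (H j)) :=
    measurableSet_closedBall.prod (MeasurableSet.univ_pi fun _ => measurableSet_closedBall)
  rw [linearFormBody, (measurePreserving_linearFormShear Θ).measure_preimage
    hK.nullMeasurableSet, Measure.prod_prod, volume_pi, Measure.pi_pi]
  have hdisc : ∀ r : ℝ, 0 ≤ r →
      volume (Metric.closedBall (0 : ℂ) r) = ENNReal.ofReal (Real.pi * r ^ 2) := fun r hr => by
    rw [Complex.volume_closedBall, ENNReal.ofReal_mul Real.pi_pos.le, ENNReal.ofReal_pow hr,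
      mul_comm, ← NNReal.coe_real_pi, ENNReal.ofReal_coe_nnreal]
  rw [ENNReal.ofReal_mul (by positivity), ENNReal.ofReal_prod_of_nonneg fun j _ => by positivity,
    hdisc ε hε]
  simp only [hdisc _ (hH _)]

end linearFormBody

theorem exists_ne_zero_linearForm_le_of_volume {g : ℂ} (hg : g.im ≠ 0) (Θ : Fin m → ℂ) {ε : ℝ}
    {H : Fin m → ℝ} (hε : 0 ≤ ε) (hH : ∀ j, 0 ≤ H j)
    (hvol : (4 * |g.im|) ^ (m + 1) ≤ (Real.pi * ε ^ 2) * ∏ j, (Real.pi * H j ^ 2)) :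
    ∃ β : Fin (m + 1) → ℂ, (∀ i, ∃ p q : ℤ, β i = p + q * g) ∧ β ≠ 0 ∧
      (∀ j, ‖β j.succ‖ ≤ H j) ∧ ‖β 0 + ∑ j, β j.succ * Θ j‖ ≤ ε := by
  let B := Pi.basis fun _ : Fin (m + 1) => Complex.basisOne g hg
  have : Countable (span ℤ (Set.range B)).toAddSubgroup :=
    inferInstanceAs (Countable (span ℤ (Set.range B)))
  have hcovol : volume (ZSpan.fundamentalDomain B) * 2 ^ finrank ℝ (Fin (m + 1) → ℂ) =
      ENNReal.ofReal ((4 * |g.im|) ^ (m + 1)) := by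
    rw [Pi.volume_fundamentalDomain_basis, Complex.volume_fundamentalDomain_basisOne,
      finrank_eq_card_basis B]
    simp only [Fintype.card_sigma, Fintype.card_fin, Finset.sum_const, Finset.card_univ,
      smul_eq_mul]
    rw [ENNReal.ofReal_pow (by positivity), ENNReal.ofReal_mul (by norm_num), mul_pow, mul_comm,
      mul_comm (m + 1), pow_mul]
    norm_num
  obtain ⟨⟨β, hβL⟩, hβ0, hβK⟩ := exists_ne_zero_mem_lattice_of_measure_mul_two_pow_le_measure
    (ZSpan.isAddFundamentalDomain' B volume) (fun _ => neg_mem_linearFormBody)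
    convex_linearFormBody isCompact_linearFormBody
    (hcovol.trans_le ((ENNReal.ofReal_le_ofReal hvol).trans_eq (volume_linearFormBody hε hH).symm))
  exact ⟨β, fun i => (Complex.mem_span_basisOne hg).1 ((Pi.mem_span_int_basis _).1 hβL i),
    by simpa using hβ0, (mem_linearFormBody.1 hβK).symm⟩

theorem exists_ne_zero_linearForm_le_pow {g : ℂ} (hg : g.im ≠ 0) (Θ : Fin m → ℂ) {c : ℝ}
    (hc : 0 ≤ c) (hcg : 4 * |g.im| = Real.pi * c ^ 2) {H : Fin m → ℝ} (hH : ∀ j, 0 < H j) :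
    ∃ β : Fin (m + 1) → ℂ, (∀ i, ∃ p q : ℤ, β i = p + q * g) ∧ β ≠ 0 ∧
      (∀ j, ‖β j.succ‖ ≤ H j) ∧ ‖β 0 + ∑ j, β j.succ * Θ j‖ ≤ c ^ (m + 1) * (1 / ∏ j, H j) := by
  have hprod : 0 < ∏ j, H j := Finset.prod_pos fun j _ => hH j
  refine exists_ne_zero_linearForm_le_of_volume hg Θ (by positivity) (fun j => (hH j).le)
    (le_of_eq ?_)
  rw [hcg, Finset.prod_mul_distrib, Finset.prod_const, Finset.card_univ, Fintype.card_fin,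
    Finset.prod_pow]
  field_simp
  ring

end LinearForm

theorem iqGen_im (D : ℕ) :
    (iqGen D).im = if D % 4 = 3 then Real.sqrt D / 2 else Real.sqrt D := by
  unfold iqGen
  split_ifs <;> simp

theorem four_mul_iqGen_im (D : ℕ) :
    4 * (iqGen D).im = Real.pi * ((2 : ℝ) ^ (if D % 4 = 3 then (1 : ℝ) / 2 else 1) *
      (D : ℝ) ^ ((1 : ℝ) / 4) / Real.sqrt Real.pi) ^ 2 := by
  have hD : ((D : ℝ) ^ ((1 : ℝ) / 4)) ^ 2 = Real.sqrt D := by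
    rw [← Real.rpow_mul_natCast (Nat.cast_nonneg D), Real.sqrt_eq_rpow]
    norm_num
  rw [div_pow, mul_pow, hD, Real.sq_sqrt Real.pi_pos.le, mul_div_cancel₀ _ Real.pi_pos.ne',
    iqGen_im]
  split_ifs
  · rw [← Real.rpow_mul_natCast zero_le_two]
    norm_num
    ring
  · norm_num

theorem iqGen_im_pos {D : ℕ} (hD0 : 0 < D) : 0 < (iqGen D).im := by
  rw [iqGen_im]
  have : 0 < Real.sqrt D := Real.sqrt_pos.2 (by exact_mod_cast hD0)
  split_ifs <;> positivity

theorem minkowski_linear_form_imaginary_quadratic_general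
    (D : ℕ) (hD0 : 0 < D)
    (m : ℕ) (Θ : Fin m → ℂ) (Hs : Fin m → ℕ) (hHs : ∀ j, 1 ≤ Hs j) :
    ∃ β : Fin (m + 1) → ℂ,
      (∀ i, β i ∈ iqInt D) ∧ β ≠ 0 ∧
      (∀ j : Fin m, ‖β j.succ‖ ≤ Hs j) ∧
      ‖β 0 + ∑ j : Fin m, β j.succ * Θ j‖ ≤
        ((2 : ℝ) ^ (if D % 4 = 3 then (1 : ℝ) / 2 else 1) * (D : ℝ) ^ ((1 : ℝ) / 4)
            / Real.sqrt Real.pi) ^ (m + 1) * (1 / ∏ j : Fin m, (Hs j : ℝ)) := by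
  have hg := iqGen_im_pos hD0
  exact exists_ne_zero_linearForm_le_pow hg.ne' Θ (by positivity)
    (by rw [abs_of_pos hg, four_mul_iqGen_im]) fun j => by exact_mod_cast hHs j

theorem minkowski_linear_form_imaginary_quadratic
    (D : ℕ) (hD : Squarefree D) (hD0 : 0 < D) (hD4 : D % 4 ≠ 0)
    (m : ℕ) (Θ : Fin m → ℂ) (Hs : Fin m → ℕ) (hHs : ∀ j, 1 ≤ Hs j) :
    ∃ β : Fin (m + 1) → ℂ,
      (∀ i, β i ∈ iqInt D) ∧ β ≠ 0 ∧
      (∀ j : Fin m, ‖β j.succ‖ ≤ Hs j) ∧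
      ‖β 0 + ∑ j : Fin m, β j.succ * Θ j‖ ≤
        ((2 : ℝ) ^ (if D % 4 = 3 then (1 : ℝ) / 2 else 1) * (D : ℝ) ^ ((1 : ℝ) / 4)
            / Real.sqrt Real.pi) ^ (m + 1) * (1 / ∏ j : Fin m, (Hs j : ℝ)) :=
  minkowski_linear_form_imaginary_quadratic_general D hD0 m Θ Hs hHs
end

section
/- Let z(y) denote the inverse function of y(z) = z log z on z ≥ 1/e. Then z is strictly increasing; moreover, defining z₀(y) = y and z_n(y) = y / log z_{n−1}(y) for n ≥ 1, for every y > e the interleaving z₁(y) < z₃(y) < ⋯ < z(y) < ⋯ < z₂(y) < z₀(y) holds; in particular z(y) < z₂(y) = y / log(y / log y) for all y > e. -/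
/-!
Fix `y > e` and put `f t = y / log t`, so that `zₙ(y) = f^[n] y`. On `[y / log y, y]` the map
`f` is a strictly decreasing self-map whose fixed point is `z y`. A strictly decreasing map
swaps the two sides of its fixed point, and its square is strictly increasing; as
`f (f y) < y`, the even iterates therefore decrease and, after one more application of `f`, the
odd ones increase. Monotonicity of `z` is inherited from that of `t ↦ t log t` on `[1/e, ∞)`.
-/

open Real Set Function

theorem StrictMonoOn.strictMonoOn_of_leftInvOn {α β : Type*} [Preorder α] [LinearOrder β]
    {g : β → α} {z : α → β} {s : Set α} {t : Set β} (hg : StrictMonoOn g t)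
    (hz : MapsTo z s t) (hinv : LeftInvOn g z s) : StrictMonoOn z s := by
  intro a ha b hb hab
  by_contra! hba
  have := hg.monotoneOn (hz hb) (hz ha) hba
  rw [hinv ha, hinv hb] at this
  exact this.not_gt hab

section Iterate

variable {α : Type*} [Preorder α] {f : α → α} {s : Set α} {x : α}

theorem StrictMonoOn.iterate_succ_lt (hf : StrictMonoOn f s) (hs : MapsTo f s s) (hx : x ∈ s)
    (hfx : f x < x) (n : ℕ) : f^[n + 1] x < f^[n] x := by
  induction n with
  | zero => exact hfx
  | succ n ih =>
    simpa only [iterate_succ_apply'] using hf (hs.iterate _ hx) (hs.iterate _ hx) ih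

theorem StrictAntiOn.iterate_odd_lt_lt_iterate_even (hf : StrictAntiOn f s) (hs : MapsTo f s s)
    {w : α} (hw : w ∈ s) (hfw : f w = w) (hx : x ∈ s) (hwx : w < x) (n : ℕ) :
    f^[2 * n + 1] x < w ∧ w < f^[2 * n] x := by
  induction n with
  | zero => exact ⟨hfw ▸ hf hw hx hwx, hwx⟩
  | succ n ih =>
    have heven : w < f^[2 * (n + 1)] x := by
      rw [mul_add_one, iterate_succ_apply' f (2 * n + 1)]
      exact hfw ▸ hf (hs.iterate _ hx) hw ih.1
    rw [iterate_succ_apply']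
    exact ⟨hfw ▸ hf hw (hs.iterate _ hx) heven, heven⟩

theorem StrictAntiOn.iterate_even_add_two_lt (hf : StrictAntiOn f s) (hs : MapsTo f s s)
    (hx : x ∈ s) (hffx : f (f x) < x) (n : ℕ) : f^[2 * n + 2] x < f^[2 * n] x := by
  rw [← mul_add_one, iterate_mul, iterate_mul]
  exact (hf.comp hf hs).iterate_succ_lt (hs.iterate 2) hx hffx n

theorem StrictAntiOn.iterate_odd_lt_iterate_odd_add_two (hf : StrictAntiOn f s)
    (hs : MapsTo f s s) (hx : x ∈ s) (hffx : f (f x) < x) (n : ℕ) :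
    f^[2 * n + 1] x < f^[2 * n + 3] x := by
  rw [iterate_succ_apply', iterate_succ_apply']
  exact hf (hs.iterate _ hx) (hs.iterate _ hx) (hf.iterate_even_add_two_lt hs hx hffx n)

end Iterate

theorem strictAntiOn_div_log {y : ℝ} (hy : 0 < y) : StrictAntiOn (fun t ↦ y / log t) (Ioi 1) :=
  fun _ ha _ _ hab ↦
    div_lt_div_of_pos_left hy (log_pos ha) (log_lt_log (zero_lt_one.trans ha) hab)

theorem exp_one_lt_div_log {y : ℝ} (hy : 1 < y) (hye : y ≠ exp 1) : exp 1 < y / log y := by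
  have hy0 : 0 < y := zero_lt_one.trans hy
  have := log_lt_sub_one_of_pos (div_pos hy0 (exp_pos 1))
    (by rwa [ne_eq, div_eq_one_iff_eq (exp_pos 1).ne'])
  rw [log_div hy0.ne' (exp_pos 1).ne', log_exp, sub_lt_sub_iff_right, lt_div_iff₀ (exp_pos 1)]
    at this
  rw [lt_div_iff₀ (log_pos hy)]
  linarith

theorem mapsTo_div_log_Icc {y : ℝ} (hy : exp 1 < y) :
    MapsTo (fun t ↦ y / log t) (Icc (y / log y) y) (Icc (y / log y) y) := by
  have hy1 : 1 < y := (one_lt_exp_iff.2 one_pos).trans hy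
  have hey := exp_one_lt_div_log hy1 hy.ne'
  rintro t ⟨hat, hty⟩
  have ht0 : 0 < t := (exp_pos 1).trans (hey.trans_le hat)
  have hlogt : 1 < log t := (lt_log_iff_exp_lt ht0).2 (hey.trans_le hat)
  exact ⟨div_le_div_of_nonneg_left (by linarith) (by linarith) (log_le_log ht0 hty),
    (div_lt_self (by linarith) hlogt).le⟩

theorem one_lt_and_lt_mul_log {w : ℝ} (hw : 0 < w) (h : exp 1 < w * log w) :
    1 < w ∧ w < w * log w := by
  have hlog : 1 < log w := by
    by_contra! hlog
    nlinarith [(log_le_iff_le_exp hw).1 hlog]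
  exact ⟨(log_pos_iff hw.le).1 (by linarith), lt_mul_of_one_lt_right hw hlog⟩

theorem inverse_of_z_log_z_nested_logarithms_general
    (z : ℝ → ℝ)
    (hz_inv : ∀ y : ℝ, -(1 / Real.exp 1) ≤ y →
      1 / Real.exp 1 ≤ z y ∧ z y * Real.log (z y) = y)
    (zs : ℕ → ℝ → ℝ)
    (hzs0 : ∀ y, zs 0 y = y)
    (hzs : ∀ n y, zs (n + 1) y = y / Real.log (zs n y)) :
    StrictMonoOn z (Set.Ici (-(1 / Real.exp 1))) ∧
    ∀ y : ℝ, Real.exp 1 < y →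
      -- the odd approximants increase: z₁ < z₃ < z₅ < ⋯
      (∀ n : ℕ, zs (2 * n + 1) y < zs (2 * n + 3) y) ∧
      -- the even approximants decrease: ⋯ < z₄ < z₂ < z₀
      (∀ n : ℕ, zs (2 * n + 2) y < zs (2 * n) y) ∧
      -- every odd approximant lies below z
      (∀ n : ℕ, zs (2 * n + 1) y < z y) ∧
      -- z lies below every even approximant
      (∀ n : ℕ, z y < zs (2 * n) y) ∧
      -- in particular z(y) < z₂(y) = y / log (y / log y)
      zs 2 y = y / Real.log (y / Real.log y) ∧
      z y < y / Real.log (y / Real.log y) := by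
  have hz_mapsTo : MapsTo z (Ici (-(1 / exp 1))) (Ici (exp (-1))) := fun y hy ↦ by
    simpa [exp_neg] using (hz_inv y hy).1
  refine ⟨mul_log_strictMonoOn.strictMonoOn_of_leftInvOn hz_mapsTo fun y hy ↦ (hz_inv y hy).2,
    fun y hy ↦ ?_⟩
  set f : ℝ → ℝ := fun t ↦ y / log t
  have hzs_eq : ∀ n, zs n y = f^[n] y := by
    intro n
    induction n with
    | zero => exact hzs0 y
    | succ n ih => rw [hzs, ih, iterate_succ_apply']
  have he1 : 1 < exp 1 := one_lt_exp_iff.2 one_pos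
  have hy0 : 0 < y := by linarith
  obtain ⟨hw, hwy⟩ := hz_inv y ((neg_nonpos.2 (by positivity)).trans hy0.le)
  obtain ⟨hw1, hw_lt⟩ :=
    one_lt_and_lt_mul_log (lt_of_lt_of_le (by positivity) hw) (by rwa [hwy])
  rw [hwy] at hw_lt
  have hfw : f (z y) = z y := (div_eq_iff (log_pos hw1).ne').2 hwy.symm
  have hey : exp 1 < y / log y := exp_one_lt_div_log (he1.trans hy) hy.ne'
  set s := Icc (y / log y) y
  have hs : MapsTo f s s := mapsTo_div_log_Icc hy
  have hf : StrictAntiOn f s :=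
    (strictAntiOn_div_log hy0).mono fun t ht ↦ show 1 < t by linarith [ht.1]
  have hy_mem : y ∈ s := ⟨div_le_self hy0.le ((lt_log_iff_exp_lt hy0).2 hy).le, le_rfl⟩
  have hw_mem : z y ∈ s :=
    ⟨hfw ▸ (strictAntiOn_div_log hy0 hw1 (he1.trans hy) hw_lt).le, hw_lt.le⟩
  have hffy : f (f y) < y := div_lt_self hy0 ((lt_log_iff_exp_lt (by linarith)).2 hey)
  have hsep := hf.iterate_odd_lt_lt_iterate_even hs hw_mem hfw hy_mem hw_lt
  simp only [hzs_eq]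
  exact ⟨hf.iterate_odd_lt_iterate_odd_add_two hs hy_mem hffy,
    hf.iterate_even_add_two_lt hs hy_mem hffy, fun n ↦ (hsep n).1, fun n ↦ (hsep n).2, rfl,
    (hsep 1).2⟩

theorem inverse_of_z_log_z_nested_logarithms
    (z : ℝ → ℝ)
    (hz_inv : ∀ y : ℝ, -(1 / Real.exp 1) ≤ y →
      1 / Real.exp 1 ≤ z y ∧ z y * Real.log (z y) = y)
    (hz_inv' : ∀ w : ℝ, 1 / Real.exp 1 ≤ w → z (w * Real.log w) = w)
    (zs : ℕ → ℝ → ℝ)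
    (hzs0 : ∀ y, zs 0 y = y)
    (hzs : ∀ n y, zs (n + 1) y = y / Real.log (zs n y)) :
    StrictMonoOn z (Set.Ici (-(1 / Real.exp 1))) ∧
    ∀ y : ℝ, Real.exp 1 < y →
      -- the odd approximants increase: z₁ < z₃ < z₅ < ⋯
      (∀ n : ℕ, zs (2 * n + 1) y < zs (2 * n + 3) y) ∧
      -- the even approximants decrease: ⋯ < z₄ < z₂ < z₀
      (∀ n : ℕ, zs (2 * n + 2) y < zs (2 * n) y) ∧
      -- every odd approximant lies below z
      (∀ n : ℕ, zs (2 * n + 1) y < z y) ∧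
      -- z lies below every even approximant
      (∀ n : ℕ, z y < zs (2 * n) y) ∧
      -- in particular z(y) < z₂(y) = y / log (y / log y)
      zs 2 y = y / Real.log (y / Real.log y) ∧
      z y < y / Real.log (y / Real.log y) :=
  inverse_of_z_log_z_nested_logarithms_general z hz_inv zs hzs0 hzs
end

section
/- Let 1, Θ₁, …, Θ_m ∈ ℝ be linearly independent over ℚ, and suppose there exist positive constants c, ω ∈ ℝ⁺ such that |β₀ + β₁Θ₁ + ⋯ + β_mΘ_m| > c/(∏_{j=1}^{m} h_j)^{ω} holds for all (β₀, …, β_m) ∈ ℤ^{m+1} \ {0}, where h_j = max{1, |β_j|}. Then ω ≥ 1. -/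
theorem exponent_ge_one_of_linear_form_lower_bound
    (m : ℕ) (hm : 0 < m) (Θ : Fin m → ℝ)
    (hind : LinearIndependent ℚ (Fin.cons 1 Θ : Fin (m + 1) → ℝ))
    (c ω : ℝ) (hc : 0 < c) (hω : 0 < ω)
    (hbound : ∀ β : Fin (m + 1) → ℤ, β ≠ 0 →
      c / (∏ j : Fin m, max 1 |(β j.succ : ℝ)|) ^ ω <
        |(β 0 : ℝ) + ∑ j : Fin m, (β j.succ : ℝ) * Θ j|) :
    1 ≤ ω := by
  by_contra hlt
  push_neg at hlt
  -- choose a large n with n^(1-ω) > 1/c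
  have h1ω : 0 < 1 - ω := by linarith
  have htend : Filter.Tendsto (fun x : ℝ => x ^ (1 - ω)) Filter.atTop Filter.atTop :=
    tendsto_rpow_atTop h1ω
  obtain ⟨N, hN⟩ := (htend.eventually_ge_atTop (1 / c + 1)).exists_forall_of_atTop
  obtain ⟨n, hn1, hnN⟩ : ∃ n : ℕ, 1 ≤ n ∧ N ≤ (n : ℝ) := by
    obtain ⟨n, hn⟩ := exists_nat_ge (max N 1)
    exact ⟨n, by exact_mod_cast le_trans (le_max_right _ _) hn,
      le_trans (le_max_left _ _) hn⟩
  have hnR : (1 : ℝ) ≤ (n : ℝ) := by exact_mod_cast hn1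
  have hnpow : 1 / c + 1 ≤ (n : ℝ) ^ (1 - ω) := hN _ hnN
  set i0 : Fin m := ⟨0, hm⟩
  obtain ⟨j, k, hk0, hkn, habs⟩ := Real.exists_int_int_abs_mul_sub_le (Θ i0) hn1
  set β : Fin (m + 1) → ℤ := Fin.cons (-j) (Pi.single i0 k) with hβ
  have hβ0 : β 0 = -j := rfl
  have hβsucc : ∀ i : Fin m, β i.succ = (Pi.single i0 k : Fin m → ℤ) i := fun i => by rw [hβ, Fin.cons_succ]
  have hβne : β ≠ 0 := by
    intro h
    have : β i0.succ = 0 := by rw [h]; rfl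
    rw [hβsucc, Pi.single_eq_same] at this
    omega
  have hkR : (1 : ℝ) ≤ (k : ℝ) := by exact_mod_cast hk0
  have hsum : ∑ i : Fin m, (β i.succ : ℝ) * Θ i = (k : ℝ) * Θ i0 := by
    rw [Finset.sum_eq_single_of_mem i0 (Finset.mem_univ _)]
    · rw [hβsucc, Pi.single_eq_same]
    · intro i _ hi
      rw [hβsucc, Pi.single_eq_of_ne hi]
      simp
  have hprod : ∏ i : Fin m, max 1 |(β i.succ : ℝ)| = (k : ℝ) := by
    rw [Finset.prod_eq_single_of_mem i0 (Finset.mem_univ _)]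
    · rw [hβsucc, Pi.single_eq_same, abs_of_nonneg (by linarith), max_eq_right hkR]
    · intro i _ hi
      rw [hβsucc, Pi.single_eq_of_ne hi]
      simp
  have hb := hbound β hβne
  rw [hprod, hβ0] at hb
  have hval : |((-j : ℤ) : ℝ) + (k : ℝ) * Θ i0| = |(k : ℝ) * Θ i0 - (j : ℝ)| := by
    push_cast; ring_nf
  rw [hsum, hval] at hb
  have hmain : c / (k : ℝ) ^ ω < 1 / ((n : ℝ) + 1) := lt_of_lt_of_le hb habs
  have hkpos : (0 : ℝ) < (k : ℝ) ^ ω := Real.rpow_pos_of_pos (by linarith) ω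
  have hn1pos : (0 : ℝ) < (n : ℝ) + 1 := by linarith
  -- c * (n+1) < k^ω ≤ n^ω ≤ n  →  c < n^(ω-1)-ish, contradict hnpow
  have h1 : c * ((n : ℝ) + 1) < (k : ℝ) ^ ω := by
    have := (div_lt_div_iff₀ hkpos hn1pos).mp hmain
    linarith
  have hkn' : (k : ℝ) ≤ (n : ℝ) := by exact_mod_cast hkn
  have h2 : (k : ℝ) ^ ω ≤ (n : ℝ) ^ ω :=
    Real.rpow_le_rpow (by linarith) hkn' (le_of_lt hω)
  have h3 : c * ((n : ℝ) + 1) < (n : ℝ) ^ ω := lt_of_lt_of_le h1 h2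
  -- now n^ω = n / n^(1-ω)
  have hnpos : (0 : ℝ) < (n : ℝ) := by linarith
  have h4 : (n : ℝ) ^ ω * (n : ℝ) ^ (1 - ω) = (n : ℝ) := by
    rw [← Real.rpow_add hnpos]
    norm_num
  have hpowpos : (0 : ℝ) < (n : ℝ) ^ (1 - ω) := Real.rpow_pos_of_pos hnpos _
  have h5 : c * ((n : ℝ) + 1) * ((n : ℝ) ^ (1 - ω)) < (n : ℝ) := by
    calc c * ((n : ℝ) + 1) * ((n : ℝ) ^ (1 - ω))
        < (n : ℝ) ^ ω * ((n : ℝ) ^ (1 - ω)) := by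
          exact mul_lt_mul_of_pos_right h3 hpowpos
      _ = (n : ℝ) := h4
  have h6 : c * ((n : ℝ) + 1) * (1 / c + 1) ≤ c * ((n : ℝ) + 1) * ((n : ℝ) ^ (1 - ω)) := by
    apply mul_le_mul_of_nonneg_left hnpow
    positivity
  have h7 : c * ((n : ℝ) + 1) * (1 / c + 1) < (n : ℝ) := lt_of_le_of_lt h6 h5
  have hexp : c * ((n : ℝ) + 1) * (1 / c + 1) = ((n : ℝ) + 1) + c * ((n : ℝ) + 1) := by
    field_simp
  rw [hexp] at h7
  nlinarith [mul_pos hc hn1pos]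
end
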